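/- The pair (H, β) is an A-module coalgebra (with A acting on the right): for all h, h' ∈ H and a, a' ∈ A, (i) β(h ⊗ a a') = β(β(h ⊗ a) ⊗ a'); (ii) β(h ⊗ 1_A) = h; (iii) ε_H(β(h ⊗ a)) = ε_H(h)·ε_A(a); (iv) Δ_H(β(h ⊗ a)) = Σ β(h₁ ⊗ a₁) ⊗ β(h₂ ⊗ a₂). -/

import Mathlib

/-!
Since `j_A`, `j_H` and the multiplication `X ⊗ X → X` are coalgebra maps, `ξ` is a coalgebra
isomorphism, and `β = (ε_A ⊗ id) ∘ ξ⁻¹ ∘ μ ∘ (j_H ⊗ j_A)` is a composite of coalgebra maps; this is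
(iii) and (iv). For (i) and (ii) write `β(h ⊗ a) = π(j_H h · j_A a)` with `π = (ε_A ⊗ id) ∘ ξ⁻¹`.
Then `π(j_A b · x) = ε(b) π(x)` and `π(j_H h) = h`; expanding `x = Σ j_A bᵢ · j_H gᵢ` gives
`π(x · j_A a') = β(π(x) ⊗ a')`, which with `x = j_H h · j_A a` is (i).
-/

open TensorProduct

noncomputable section

universe u

variable {k A H X : Type u} [Field k]
  [Ring A] [Ring H] [Ring X]
  [Bialgebra k A] [Bialgebra k H] [Bialgebra k X]

/-- ζ : H ⊗ A → A ⊗ H, ζ(h ⊗ a) = ξ⁻¹(j_H(h) · j_A(a)). -/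
def zetaF (jA : A →ₐc[k] X) (jH : H →ₐc[k] X) (ξ : (A ⊗[k] H) ≃ₗ[k] X) :
    H ⊗[k] A →ₗ[k] A ⊗[k] H :=
  ξ.symm.toLinearMap ∘ₗ LinearMap.mul' k X ∘ₗ
    TensorProduct.map (jH : H →ₗ[k] X) (jA : A →ₗ[k] X)

/-- α := (id_A ⊗ ε_H) ∘ ζ. -/
def alphaF (jA : A →ₐc[k] X) (jH : H →ₐc[k] X) (ξ : (A ⊗[k] H) ≃ₗ[k] X) :
    H ⊗[k] A →ₗ[k] A :=
  (TensorProduct.rid k A).toLinearMap ∘ₗ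
    TensorProduct.map LinearMap.id Coalgebra.counit ∘ₗ zetaF jA jH ξ

/-- β := (ε_A ⊗ id_H) ∘ ζ. -/
def betaF (jA : A →ₐc[k] X) (jH : H →ₐc[k] X) (ξ : (A ⊗[k] H) ≃ₗ[k] X) :
    H ⊗[k] A →ₗ[k] H :=
  (TensorProduct.lid k H).toLinearMap ∘ₗ
    TensorProduct.map Coalgebra.counit LinearMap.id ∘ₗ zetaF jA jH ξ

section ProductCoalgHom

variable {R C D B : Type*} [CommSemiring R] [AddCommMonoid C] [Module R C] [Coalgebra R C]
  [AddCommMonoid D] [Module R D] [Coalgebra R D] [Semiring B] [Bialgebra R B]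

def productCoalgHom (f : C →ₗc[R] B) (g : D →ₗc[R] B) : C ⊗[R] D →ₗc[R] B :=
  (Bialgebra.mulCoalgHom R B).comp (Coalgebra.TensorProduct.map f g)

@[simp]
lemma productCoalgHom_tmul (f : C →ₗc[R] B) (g : D →ₗc[R] B) (c : C) (d : D) :
    productCoalgHom f g (c ⊗ₜ d) = f c * g d :=
  rfl

end ProductCoalgHom

section

variable (jA : A →ₐc[k] X) (jH : H →ₐc[k] X) (ξ : (A ⊗[k] H) ≃ₗ[k] X)

def piF : X →ₗ[k] H :=
  (TensorProduct.lid k H).toLinearMap ∘ₗ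
    TensorProduct.map Coalgebra.counit LinearMap.id ∘ₗ ξ.symm.toLinearMap

lemma piF_apply_xi_tmul (a : A) (h : H) :
    piF ξ (ξ (a ⊗ₜ h)) = Coalgebra.counit (R := k) a • h := by
  simp [piF]

lemma betaF_tmul (h : H) (a : A) : betaF jA jH ξ (h ⊗ₜ a) = piF ξ (jH h * jA a) := by
  simp [betaF, zetaF, piF]

variable {jA jH ξ} (hξ : ∀ (a : A) (h : H), ξ (a ⊗ₜ[k] h) = jA a * jH h)
include hξ

lemma piF_jA_mul (b : A) (x : X) :
    piF ξ (jA b * x) = Coalgebra.counit (R := k) b • piF ξ x := by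
  obtain ⟨w, rfl⟩ := ξ.surjective x
  induction w using TensorProduct.induction_on with
  | zero => simp
  | tmul a h =>
    rw [hξ, ← mul_assoc, ← map_mul, ← hξ, ← hξ, piF_apply_xi_tmul, piF_apply_xi_tmul,
      Bialgebra.counit_mul, mul_smul]
  | add w w' hw hw' => simp only [map_add, mul_add, hw, hw', smul_add]

lemma piF_jH (h : H) : piF ξ (jH h) = h := by
  simpa [hξ] using piF_apply_xi_tmul ξ 1 h

lemma piF_mul_jA (x : X) (a : A) : piF ξ (x * jA a) = betaF jA jH ξ (piF ξ x ⊗ₜ a) := by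
  obtain ⟨w, rfl⟩ := ξ.surjective x
  induction w using TensorProduct.induction_on with
  | zero => simp
  | tmul b g =>
    rw [hξ, mul_assoc, piF_jA_mul hξ, piF_jA_mul hξ, piF_jH hξ, ← betaF_tmul, ← map_smul,
      smul_tmul']
  | add w w' hw hw' => simp only [map_add, add_mul, hw, hw', add_tmul]

lemma coe_productCoalgHom_eq_xi : ⇑(productCoalgHom jA.toCoalgHom jH.toCoalgHom) = ξ :=
  congrArg DFunLike.coe (TensorProduct.ext' fun a h ↦ (hξ a h).symm :
    (productCoalgHom jA.toCoalgHom jH.toCoalgHom : A ⊗[k] H →ₗ[k] X) = ξ)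

def xiCoalgEquiv : A ⊗[k] H ≃ₗc[k] X :=
  CoalgEquiv.ofBijective (f := productCoalgHom jA.toCoalgHom jH.toCoalgHom)
    (coe_productCoalgHom_eq_xi hξ ▸ ξ.bijective)

lemma xiCoalgEquiv_symm_apply (x : X) : (xiCoalgEquiv hξ).symm x = ξ.symm x :=
  ξ.injective <| by
    rw [ξ.apply_symm_apply, ← coe_productCoalgHom_eq_xi hξ]
    exact (xiCoalgEquiv hξ).apply_symm_apply x

def betaCoalgHom : H ⊗[k] A →ₗc[k] H :=
  (Coalgebra.TensorProduct.lid k H).toCoalgHom.comp <|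
    (Coalgebra.TensorProduct.map (Coalgebra.counitCoalgHom k A) (CoalgHom.id k H)).comp <|
      (xiCoalgEquiv hξ).symm.toCoalgHom.comp (productCoalgHom jH.toCoalgHom jA.toCoalgHom)

lemma betaCoalgHom_toLinearMap : (betaCoalgHom hξ : H ⊗[k] A →ₗ[k] H) = betaF jA jH ξ :=
  TensorProduct.ext' fun _ _ ↦ congrArg _ (congrArg _ (xiCoalgEquiv_symm_apply hξ _))

end

/-- (H, β) is an A-module coalgebra (with A acting on the right). -/
theorem beta_module_coalgebra (jA : A →ₐc[k] X) (jH : H →ₐc[k] X)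
    (ξ : (A ⊗[k] H) ≃ₗ[k] X)
    (hξ : ∀ (a : A) (h : H), ξ (a ⊗ₜ[k] h) = jA a * jH h) :
    ∀ (h h' : H) (a a' : A),
      betaF jA jH ξ (h ⊗ₜ[k] (a * a'))
        = betaF jA jH ξ (betaF jA jH ξ (h ⊗ₜ[k] a) ⊗ₜ[k] a') ∧
      betaF jA jH ξ (h ⊗ₜ[k] (1 : A)) = h ∧
      Coalgebra.counit (R := k) (betaF jA jH ξ (h ⊗ₜ[k] a))
        = Coalgebra.counit (R := k) h * Coalgebra.counit (R := k) a ∧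
      Coalgebra.comul (R := k) (betaF jA jH ξ (h ⊗ₜ[k] a))
        = TensorProduct.map (betaF jA jH ξ) (betaF jA jH ξ)
            (Coalgebra.comul (R := k) (h ⊗ₜ[k] a)) := by
  intro h _ a a'
  refine ⟨?_, ?_, ?_, ?_⟩
  · rw [betaF_tmul, map_mul jA, ← mul_assoc, piF_mul_jA hξ, ← betaF_tmul]
  · rw [betaF_tmul, map_one, mul_one, piF_jH hξ]
  · rw [← betaCoalgHom_toLinearMap hξ, CoalgHom.coe_toLinearMap, CoalgHomClass.counit_comp_apply,
      TensorProduct.counit_tmul, smul_eq_mul, mul_comm]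
  · rw [← betaCoalgHom_toLinearMap hξ, CoalgHom.coe_toLinearMap,
      CoalgHomClass.map_comp_comul_apply]
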